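/- Let A ⊆ ℕ be a computably enumerable set and let a : ℕ → Bool be its characteristic sequence (a_i = true iff i ∈ A). Then there exists a constant c such that K(a↾n) ≤ c·log₂ n for all n ≥ 2, where a↾n denotes the binary string of the first n bits of a. -/

import Mathlib

/-- Plain Kolmogorov complexity of `x` with respect to decompressor `D`. -/
noncomputable def Kc (D : List Bool →. List Bool) (x : List Bool) : ℕ∞ :=
  sInf {n : ℕ∞ | ∃ p : List Bool, x ∈ D p ∧ (p.length : ℕ∞) = n}

/-- `U` is an optimal decompressor. -/
def OptimalDecompressor (U : List Bool →. List Bool) : Prop :=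
  Partrec U ∧ ∀ D : List Bool →. List Bool, Partrec D →
    ∃ c : ℕ, ∀ x : List Bool, Kc U x ≤ Kc D x + (c : ℕ∞)

/-!
Enumerate `A` in stages `A₀ ⊆ A₁ ⊆ ⋯`. The prefix `a↾n` is determined by `n` together with
`k = |A ∩ [0, n)|`, and the pair `(n, k)` fits into about `2 log₂ n` bits: given them, wait for the
first stage `s` with `|Aₛ ∩ [0, n)| = k`; since `Aₛ ⊆ A`, at that stage `Aₛ ∩ [0, n) = A ∩ [0, n)`.
Optimality of `U` costs only an additive constant, which `c · log₂ n` absorbs for `n ≥ 2`.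
-/

open Nat.Partrec (Code)
open Nat.Partrec.Code Filter

lemma Kc_le_length {D : List Bool →. List Bool} {p x : List Bool} (h : x ∈ D p) :
    Kc D x ≤ p.length :=
  sInf_le ⟨p, h, rfl⟩

namespace Nat

def ofBitsList (l : List Bool) : ℕ :=
  l.foldr Nat.bit 0

theorem ofBitsList_bits (n : ℕ) : ofBitsList n.bits = n := by
  induction n using Nat.binaryRec' with
  | zero => rfl
  | bit b n h ih => rw [bits_append_bit n b h, ofBitsList, List.foldr_cons, ← ofBitsList, ih]

theorem primrec_ofBitsList : Primrec ofBitsList :=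
  (Primrec.list_foldr .id (.const 0) <| Primrec.to₂ <|
    Primrec.cond (Primrec.fst.comp .snd) (Primrec.nat_double_succ.comp (Primrec.snd.comp .snd))
      (Primrec.nat_double.comp (Primrec.snd.comp .snd))).of_eq fun _ => rfl

theorem size_pair_le {n k : ℕ} (hk : k ≤ n) : (pair n k).size ≤ 2 * log 2 n + 2 := by
  rw [size_le]
  have hn : n + 1 ≤ 2 ^ (log 2 n + 1) := lt_pow_succ_log_self one_lt_two n
  calc pair n k < (max n k + 1) ^ 2 := pair_lt_max_add_one_sq n k
    _ ≤ (2 ^ (log 2 n + 1)) ^ 2 := by rw [max_eq_left hk]; gcongr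
    _ = 2 ^ (2 * log 2 n + 2) := by ring

end Nat

theorem List.map_eq_map_of_le_of_countP_eq {α : Type*} {f g : α → Bool} {l : List α}
    (hle : ∀ x ∈ l, f x ≤ g x) (hc : l.countP f = l.countP g) : l.map f = l.map g := by
  induction l with
  | nil => rfl
  | cons x l ih =>
    simp only [List.countP_cons, List.mem_cons, forall_eq_or_imp] at hle hc
    have htail : l.countP f ≤ l.countP g :=
      List.countP_mono_left fun y hy => Bool.le_iff_imp.1 (hle.2 y hy)
    have hx : f x = g x := by
      have := hle.1
      revert this hc
      cases f x <;> cases g x <;> simp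
      omega
    rw [List.map_cons, List.map_cons, hx, ih hle.2 (by rw [hx] at hc; omega)]

structure IsIncreasingApprox (b : ℕ → ℕ → Bool) (a : ℕ → Bool) : Prop where
  monotone : ∀ i, Monotone (b · i)
  le : ∀ s i, b s i ≤ a i
  exists_eq_true : ∀ i, a i = true → ∃ s, b s i = true

namespace IsIncreasingApprox

variable {b : ℕ → ℕ → Bool} {a : ℕ → Bool}

theorem eventually_eq (h : IsIncreasingApprox b a) (i : ℕ) : ∀ᶠ s in atTop, b s i = a i := by
  cases hai : a i with
  | false => exact Eventually.of_forall fun s => Bool.eq_false_of_le_false (hai ▸ h.le s i)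
  | true =>
    obtain ⟨s₀, hs₀⟩ := h.exists_eq_true i hai
    exact eventually_atTop.2 ⟨s₀, fun s hs => Bool.le_iff_imp.1 (h.monotone i hs) hs₀⟩

theorem exists_map_range_eq (h : IsIncreasingApprox b a) (n : ℕ) :
    ∃ s, (List.range n).map (b s) = (List.range n).map a :=
  (((Finset.range n).eventually_all.2 fun i _ => h.eventually_eq i).exists).imp fun _ hs =>
    List.map_congr_left fun i hi => hs i (Finset.mem_range.2 (List.mem_range.1 hi))

end IsIncreasingApprox

theorem exists_primrec_isIncreasingApprox {a : ℕ → Bool} (ha : REPred fun i => a i = true) :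
    ∃ b, Primrec₂ b ∧ IsIncreasingApprox b a := by
  have hpart : Nat.Partrec fun i => (Part.assert (a i = true) fun _ => Part.some ()).map
      Encodable.encode :=
    Partrec.nat_iff.1 (ha.map (Computable.encode.comp Computable.snd).to₂)
  obtain ⟨c, hc⟩ := Code.exists_code.1 hpart
  have hdom : ∀ i, (eval c i).Dom ↔ a i = true := by simp [hc, Part.assert]
  refine ⟨fun s i => (evaln s c i).isSome, ?_, fun i s s' hss => ?_, fun s i => ?_, fun i hi => ?_⟩
  · exact Primrec.option_isSome.comp
      (primrec_evaln.comp ((Primrec.fst.pair (Primrec.const c)).pair Primrec.snd))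
  · exact Bool.le_iff_imp.2 fun hs => by
      obtain ⟨x, hx⟩ := Option.isSome_iff_exists.1 hs
      exact Option.isSome_iff_exists.2 ⟨x, evaln_mono hss hx⟩
  · exact Bool.le_iff_imp.2 fun hs => by
      obtain ⟨x, hx⟩ := Option.isSome_iff_exists.1 hs
      exact (hdom i).1 (Part.dom_iff_mem.2 ⟨x, evaln_sound hx⟩)
  · obtain ⟨x, hx⟩ := Part.dom_iff_mem.1 ((hdom i).2 hi)
    obtain ⟨s, hs⟩ := evaln_complete.1 hx
    exact ⟨s, Option.isSome_iff_exists.2 ⟨x, hs⟩⟩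

def stageGuess (b : ℕ → ℕ → Bool) (n k s : ℕ) : Option (List Bool) :=
  if (List.range n).countP (b s) = k then some ((List.range n).map (b s)) else none

def countDecompressor (b : ℕ → ℕ → Bool) : List Bool →. List Bool := fun p =>
  Nat.rfindOpt (stageGuess b (Nat.ofBitsList p).unpair.1 (Nat.ofBitsList p).unpair.2)

section countDecompressor

variable {b : ℕ → ℕ → Bool}

theorem primrec_stageGuess (hb : Primrec₂ b) :
    Primrec fun q : (ℕ × ℕ) × ℕ => stageGuess b q.1.1 q.1.2 q.2 := by
  have hrange : Primrec fun q : (ℕ × ℕ) × ℕ => List.range q.1.1 :=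
    Primrec.list_range.comp (Primrec.fst.comp .fst)
  have hstage : Primrec fun q : (ℕ × ℕ) × ℕ => (List.range q.1.1).map (b q.2) :=
    Primrec.list_map hrange (hb.comp (Primrec.snd.comp .fst) .snd)
  have hrel : PrimrecRel fun i s => b s i = true :=
    Primrec₂.primrecRel ((hb.comp Primrec.snd .fst).of_eq fun _ => Bool.decide_eq_true.symm)
  have hcount : Primrec fun q : (ℕ × ℕ) × ℕ => (List.range q.1.1).countP (b q.2) :=
    (Primrec.list_length.comp (hrel.listFilter.comp hrange .snd)).of_eq fun q => by
      simp [List.countP_eq_length_filter]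
  exact Primrec.ite (Primrec.eq.comp hcount (Primrec.snd.comp .fst))
    (Primrec.option_some.comp hstage) (.const none)

theorem partrec_countDecompressor (hb : Primrec₂ b) : Partrec (countDecompressor b) :=
  Partrec.rfindOpt <| Primrec.to_comp <| Primrec.to₂ <| (primrec_stageGuess hb).comp <|
    (Primrec.unpair.comp (Nat.primrec_ofBitsList.comp .fst)).pair .snd

variable {a : ℕ → Bool}

theorem IsIncreasingApprox.eq_of_mem_stageGuess (h : IsIncreasingApprox b a) {n s : ℕ}
    {l : List Bool} (hl : l ∈ stageGuess b n ((List.range n).countP a) s) :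
    l = (List.range n).map a := by
  unfold stageGuess at hl
  split_ifs at hl with hc
  · rw [← Option.mem_some_iff.1 hl]
    exact List.map_eq_map_of_le_of_countP_eq (fun i _ => h.le s i) hc
  · exact absurd hl (Option.not_mem_none l)

theorem IsIncreasingApprox.mem_countDecompressor (h : IsIncreasingApprox b a) (n : ℕ) :
    (List.range n).map a ∈ countDecompressor b (Nat.pair n ((List.range n).countP a)).bits := by
  rw [countDecompressor, Nat.ofBitsList_bits, Nat.unpair_pair]
  obtain ⟨s, hs⟩ := h.exists_map_range_eq n
  have hguess : (List.range n).map a ∈ stageGuess b n ((List.range n).countP a) s := by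
    have hcount := congrArg (List.countP id) hs
    simp only [List.countP_map, Function.id_comp] at hcount
    rw [stageGuess, if_pos hcount, hs]
    rfl
  obtain ⟨l, hl⟩ := Part.dom_iff_mem.1 (Nat.rfindOpt_dom.2 ⟨s, _, hguess⟩)
  obtain ⟨s', hs'⟩ := Nat.rfindOpt_spec hl
  rwa [h.eq_of_mem_stageGuess hs'] at hl

theorem IsIncreasingApprox.Kc_countDecompressor_le (h : IsIncreasingApprox b a) (n : ℕ) :
    Kc (countDecompressor b) ((List.range n).map a) ≤ (2 * Nat.log 2 n + 2 : ℕ) := by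
  refine (Kc_le_length (h.mem_countDecompressor n)).trans ?_
  rw [Nat.size_eq_bits_len, Nat.cast_le]
  exact Nat.size_pair_le (List.countP_le_length.trans_eq List.length_range)

end countDecompressor

/-- For a computably enumerable set `A ⊆ ℕ` with characteristic sequence `a`,
the prefixes satisfy `K(a↾n) ≤ c·log₂ n` for all `n ≥ 2`. -/
theorem ce_characteristic_sequence_compressible
    (U : List Bool →. List Bool) (hU : OptimalDecompressor U)
    (A : Set ℕ) (hA : REPred (· ∈ A))
    (a : ℕ → Bool) (ha : ∀ i : ℕ, a i = true ↔ i ∈ A) :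
    ∃ c : ℕ, ∀ n : ℕ, 2 ≤ n →
      Kc U ((List.range n).map a) ≤ ((c * Nat.log 2 n : ℕ) : ℕ∞) := by
  obtain ⟨b, hb, happrox⟩ := exists_primrec_isIncreasingApprox (hA.of_eq fun i => (ha i).symm)
  obtain ⟨c, hc⟩ := hU.2 _ (partrec_countDecompressor hb)
  refine ⟨c + 4, fun n hn => ?_⟩
  have hlog : 1 ≤ Nat.log 2 n := Nat.log_pos one_lt_two hn
  calc Kc U ((List.range n).map a)
      ≤ Kc (countDecompressor b) ((List.range n).map a) + c := hc _
    _ ≤ (2 * Nat.log 2 n + 2 : ℕ) + c := by gcongr; exact happrox.Kc_countDecompressor_le n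
    _ ≤ ((c + 4) * Nat.log 2 n : ℕ) := by norm_cast; nlinarith
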